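/- Let p be a prime with p ≡ 1 (mod 8) and let π ∈ ℤ[√2] be an element of norm p with conjugate π′. Then π is a square modulo π′ if and only if 2 is a fourth power in 𝔽_p, i.e. if and only if there exists z ∈ 𝔽_p with z⁴ = 2. -/

import Mathlib

/-! Since `π * star π = p` and `p ∤ π.im`, sending `√2` to `r = π.re / π.im` (a square root of `2`
in `𝔽_p`) gives a surjection `ℤ√2 → 𝔽_p` with kernel `star π * ℤ√2`. It maps `π` to
`2 * π.im * r`, so `π` is a square modulo `star π` iff `2 * π.im * r` is a square in `𝔽_p`. For
`p ≡ 1 (mod 8)` both `2` and `-1` are squares, and so is `π.im`: its odd part `m` divides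
`π.re ^ 2 - p`, so quadratic reciprocity gives `(m / p) = (p / m) = (π.re ^ 2 / m) = 1`. Hence the
condition is that the square root `r` of `2` is a square, i.e. that `2` is a fourth power. -/

theorem isSquare_mul_iff_of_isSquare {F : Type*} [Field F] {c x : F} (hc : IsSquare c)
    (hc₀ : c ≠ 0) : IsSquare (c * x) ↔ IsSquare x :=
  ⟨fun h => by simpa [hc₀] using h.div hc, hc.mul⟩

theorem isSquare_iff_exists_pow_four_eq {R : Type*} [CommRing R] [NoZeroDivisors R] {r c : R}
    (h₁ : IsSquare (-1 : R)) (hr : r ^ 2 = c) : IsSquare r ↔ ∃ z : R, z ^ 4 = c := by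
  constructor
  · rintro ⟨s, rfl⟩
    exact ⟨s, by rw [← hr]; ring⟩
  · rintro ⟨z, hz⟩
    have : (z ^ 2 - r) * (z ^ 2 + r) = 0 := by linear_combination hz - hr
    rcases mul_eq_zero.mp this with h | h
    · exact ⟨z, by linear_combination -h⟩
    · obtain ⟨i, hi⟩ := h₁
      exact ⟨i * z, by linear_combination h + z ^ 2 * hi⟩

namespace Zsqrtd

variable {d : ℤ} {π : ℤ√d} {p : ℕ}

theorem isCoprime_re_im_of_squarefree_norm (h : Squarefree π.norm) : IsCoprime π.re π.im := by
  rw [Int.isCoprime_iff_gcd_eq_one]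
  have hg : (Int.gcd π.re π.im : ℤ) * Int.gcd π.re π.im ∣ π.norm := by
    rw [norm_def]
    exact dvd_sub (mul_dvd_mul (Int.gcd_dvd_left _ _) (Int.gcd_dvd_left _ _))
      (mul_dvd_mul (dvd_mul_of_dvd_right (Int.gcd_dvd_right _ _) _) (Int.gcd_dvd_right _ _))
  simpa [Int.isUnit_iff] using h _ hg

variable [hp : Fact p.Prime]

theorem isCoprime_re_im_of_norm_eq_prime (hπ : π.norm = p) : IsCoprime π.re π.im :=
  isCoprime_re_im_of_squarefree_norm (hπ ▸ Int.squarefree_natCast.mpr hp.out.squarefree)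

theorem not_dvd_im_of_norm_eq_prime (hπ : π.norm = p) : ¬ (p : ℤ) ∣ π.im := by
  intro him
  have hre : (p : ℤ) ∣ π.re := by
    refine (Nat.prime_iff_prime_int.mp hp.out).dvd_of_dvd_pow (n := 2) ?_
    have : π.re ^ 2 = π.norm + d * π.im * π.im := by rw [norm_def]; ring
    rw [this, hπ]
    exact dvd_add dvd_rfl (dvd_mul_of_dvd_right him _)
  exact Nat.prime_iff_prime_int.mp hp.out |>.not_isUnit
    ((isCoprime_re_im_of_norm_eq_prime hπ).isUnit_of_dvd' hre him)

theorem intCast_im_ne_zero_of_norm_eq_prime (hπ : π.norm = p) : (π.im : ZMod p) ≠ 0 := by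
  rw [Ne, ZMod.intCast_zmod_eq_zero_iff_dvd]
  exact not_dvd_im_of_norm_eq_prime hπ

variable (π p) in
def sqrtdModStar : ZMod p := (π.re : ZMod p) / π.im

theorem im_mul_sqrtdModStar (hπ : π.norm = p) : π.im * sqrtdModStar π p = π.re :=
  mul_div_cancel₀ _ (intCast_im_ne_zero_of_norm_eq_prime hπ)

theorem sqrtdModStar_mul_self (hπ : π.norm = p) : sqrtdModStar π p * sqrtdModStar π p = d := by
  have hnorm : ((π.norm : ℤ) : ZMod p) = 0 := by simp [hπ]
  have him := intCast_im_ne_zero_of_norm_eq_prime hπ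
  rw [norm_def] at hnorm
  push_cast at hnorm
  apply mul_left_cancel₀ (mul_ne_zero him him)
  linear_combination hnorm + (↑π.re + ↑π.im * sqrtdModStar π p) * im_mul_sqrtdModStar hπ

def residueModStar (hπ : π.norm = p) : ℤ√d →+* ZMod p :=
  lift ⟨sqrtdModStar π p, sqrtdModStar_mul_self hπ⟩

theorem residueModStar_apply (hπ : π.norm = p) (x : ℤ√d) :
    residueModStar hπ x = x.re + x.im * sqrtdModStar π p :=
  rfl

theorem residueModStar_self (hπ : π.norm = p) :
    residueModStar hπ π = 2 * π.im * sqrtdModStar π p := by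
  rw [residueModStar_apply, ← im_mul_sqrtdModStar hπ]
  ring

theorem residueModStar_star_self (hπ : π.norm = p) : residueModStar hπ (star π) = 0 := by
  rw [residueModStar_apply, re_star, im_star, ← im_mul_sqrtdModStar hπ]
  push_cast
  ring

theorem residueModStar_surjective (hπ : π.norm = p) : Function.Surjective (residueModStar hπ) :=
  fun y => ⟨(y.val : ℤ), by simp⟩

theorem residueModStar_eq_zero_iff (hπ : π.norm = p) {x : ℤ√d} :
    residueModStar hπ x = 0 ↔ star π ∣ x := by
  refine ⟨fun hx => ?_, fun ⟨y, hy⟩ => by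
    rw [hy, map_mul, residueModStar_star_self, zero_mul]⟩
  have hr := sqrtdModStar_mul_self hπ
  have him := im_mul_sqrtdModStar hπ
  rw [residueModStar_apply] at hx
  -- with `r = sqrtdModStar π p`: `(π * x).re ≡ π.im * r * (x.re + x.im * r)` and
  -- `(π * x).im ≡ π.im * (x.re + x.im * r)` modulo `p`
  have hdvd : ((p : ℤ) : ℤ√d) ∣ π * x := by
    rw [intCast_dvd, ← ZMod.intCast_zmod_eq_zero_iff_dvd,
      ← ZMod.intCast_zmod_eq_zero_iff_dvd, re_mul, im_mul]
    push_cast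
    constructor
    · linear_combination (π.im * sqrtdModStar π p) * hx - (x.re : ZMod p) * him
        - (π.im * x.im : ZMod p) * hr
    · linear_combination (π.im : ZMod p) * hx - (x.im : ZMod p) * him
  obtain ⟨y, hy⟩ := hdvd
  refine ⟨y, Zsqrtd.eq_of_smul_eq_smul_left (a := p) (by exact_mod_cast hp.out.ne_zero) ?_⟩
  have hpπ : ((p : ℤ) : ℤ√d) = π * star π := by rw [← hπ, norm_eq_mul_conj]
  rw [hpπ] at hy ⊢
  linear_combination star π * hy

theorem exists_star_dvd_sub_sq_iff (hπ : π.norm = p) (x : ℤ√d) :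
    (∃ σ : ℤ√d, star π ∣ x - σ ^ 2) ↔ IsSquare (residueModStar hπ x) := by
  simp only [← residueModStar_eq_zero_iff hπ, map_sub, map_pow, sub_eq_zero,
    isSquare_iff_exists_sq]
  exact (residueModStar_surjective hπ).exists (p := fun r => residueModStar hπ x = r ^ 2) |>.symm

end Zsqrtd

theorem ZMod.isSquare_natCast_of_dvd_sq_sub {p m : ℕ} [Fact p.Prime] (hp : p % 4 = 1)
    (hm : Odd m) {a : ℤ} (ha : IsCoprime a m) (hdvd : (m : ℤ) ∣ a ^ 2 - p) :
    IsSquare (m : ZMod p) := by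
  have hJ : jacobiSym m p = 1 := by
    rw [← jacobiSym.quadratic_reciprocity_one_mod_four hp hm,
      jacobiSym.mod_left' (Int.modEq_iff_dvd.mpr hdvd)]
    exact jacobiSym.sq_one' (Int.isCoprime_iff_gcd_eq_one.mp ha)
  simpa using ZMod.isSquare_of_jacobiSym_eq_one hJ

namespace Zsqrtd

variable {p : ℕ} [Fact p.Prime]

theorem isSquare_intCast_im_of_norm_eq_prime {π : ℤ√2} (hmod : p % 8 = 1) (hπ : π.norm = p) :
    IsSquare (π.im : ZMod p) := by
  have h₂ : IsSquare (2 : ZMod p) := (ZMod.exists_sq_eq_two_iff (by omega)).mpr (Or.inl hmod)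
  have hneg : IsSquare (-1 : ZMod p) := ZMod.exists_sq_eq_neg_one_iff.mpr (by omega)
  suffices h : IsSquare (π.im.natAbs : ZMod p) by
    rcases Int.natAbs_eq π.im with him | him <;> rw [him]
    · simpa using h
    · simpa using hneg.mul h
  obtain him | him := eq_or_ne π.im.natAbs 0
  · simp [him]
  obtain ⟨k, m, hm, hkm⟩ := Nat.exists_eq_two_pow_mul_odd him
  have hmdvd : (m : ℤ) ∣ π.im := Int.natCast_dvd.mpr (hkm ▸ dvd_mul_left m _)
  have hcop : IsCoprime π.re m :=
    (isCoprime_re_im_of_norm_eq_prime hπ).of_isCoprime_of_dvd_right hmdvd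
  have hsub : π.re ^ 2 - p = 2 * π.im * π.im := by rw [← hπ, norm_def]; ring
  rw [hkm, Nat.cast_mul, Nat.cast_pow, Nat.cast_two]
  exact (h₂.pow k).mul (ZMod.isSquare_natCast_of_dvd_sq_sub (by omega) hm hcop
    (hsub ▸ dvd_mul_of_dvd_right hmdvd _))

end Zsqrtd

open Zsqrtd in
/-- Let `p ≡ 1 (mod 8)` be prime and `π ∈ ℤ[√2]` of norm `p` with conjugate `π′ = star π`.
Then `π` is a square modulo `π′` if and only if `2` is a fourth power in `𝔽_p`. -/
theorem sq_mod_conj_iff_two_fourth_power (p : ℕ) (hp : Nat.Prime p) (hmod : p % 8 = 1)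
    (π : ℤ√2) (hπ : π.norm = (p : ℤ)) :
    (∃ σ : ℤ√2, star π ∣ π - σ ^ 2) ↔ ∃ z : ZMod p, z ^ 4 = 2 := by
  have := Fact.mk hp
  have h₂ : IsSquare (2 : ZMod p) := (ZMod.exists_sq_eq_two_iff (by omega)).mpr (Or.inl hmod)
  have h₂im : (2 * π.im : ZMod p) ≠ 0 :=
    mul_ne_zero (Ring.two_ne_zero (by rw [ZMod.ringChar_zmod_n]; omega))
      (intCast_im_ne_zero_of_norm_eq_prime hπ)
  rw [exists_star_dvd_sub_sq_iff hπ, residueModStar_self,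
    isSquare_mul_iff_of_isSquare (h₂.mul (isSquare_intCast_im_of_norm_eq_prime hmod hπ)) h₂im]
  exact isSquare_iff_exists_pow_four_eq (ZMod.exists_sq_eq_neg_one_iff.mpr (by omega))
    (by simpa [sq] using sqrtdModStar_mul_self hπ)
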